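/- arXiv:math/9912247 — 2 statements merged into one kernel-verified Lean document; each statement's English description precedes it below -/
import Mathlib

section
/- Let L be a unimodular subgroup of ℤ^n and let a, b ∈ L be distinct. Then a − b is a circuit of L if and only if there exists u ∈ ℝL such that the closed face F_u = {x ∈ ℝL : ⌊u_i⌋ ≤ x_i ≤ ⌈u_i⌉ for all i} contains both a and b and has affine dimension 1. -/
/-- A sublattice `L ⊆ ℤ^ι` is *unimodular* if it is the image of an injective linear map given
by an integer matrix `B` with linearly independent columns, all of whose maximal minors lie in
`{0, 1, -1}`. -/
def IsUnimodular {ι : Type*} [Fintype ι] (L : Submodule ℤ (ι → ℤ)) : Prop :=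
  ∃ (m : ℕ) (B : Matrix ι (Fin m) ℤ),
    LinearIndependent ℤ B.transpose ∧
    (∀ r : Fin m ↪ ι, (B.submatrix r id).det ∈ ({0, 1, -1} : Set ℤ)) ∧
    L = LinearMap.range B.mulVecLin

/-- The canonical map `ℤ^n → ℝ^n`. -/
def intCastVec {n : ℕ} (v : Fin n → ℤ) : Fin n → ℝ := fun i => (v i : ℝ)

/-- `ℝL`, the real span of a lattice `L ⊆ ℤ^n` inside `ℝ^n`. -/
def realSpan {n : ℕ} (L : Submodule ℤ (Fin n → ℤ)) : Submodule ℝ (Fin n → ℝ) :=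
  Submodule.span ℝ (intCastVec '' (L : Set (Fin n → ℤ)))

/-- The closed face `F_u = {x ∈ ℝL : ⌊u_i⌋ ≤ x_i ≤ ⌈u_i⌉ for all i}` of the arrangement `H_L`
determined by a point `u`. -/
def closedFace {n : ℕ} (L : Submodule ℤ (Fin n → ℤ)) (u : Fin n → ℝ) : Set (Fin n → ℝ) :=
  {x | x ∈ realSpan L ∧ ∀ i, (⌊u i⌋ : ℝ) ≤ x i ∧ x i ≤ (⌈u i⌉ : ℝ)}

/-- `v` is a circuit of `L`: a nonzero vector of `L` whose coordinates have gcd `1` and whose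
support is minimal with respect to inclusion among supports of nonzero elements of `L`. -/
def IsCircuit {n : ℕ} (L : Submodule ℤ (Fin n → ℤ)) (v : Fin n → ℤ) : Prop :=
  v ∈ L ∧ v ≠ 0 ∧ Finset.univ.gcd v = 1 ∧
    ∀ w ∈ L, w ≠ 0 → {i | w i ≠ 0} ⊆ {i | v i ≠ 0} → {i | w i ≠ 0} = {i | v i ≠ 0}

/-!
Write `c = a - b` and `L = B ℤ^m` with `B` injective. If `c = B x` is a circuit, the rows of `B`
on which `c` vanishes, together with one row `i₀` in the support of `c`, have full rank: a kernel
vector would produce an element of `L` with strictly smaller support. So they contain an invertible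
`m × m` minor `M`, and Cramer's rule gives `det M · c_i = c_{i₀} · det M_i`, where `M_i` is `M`
with the row of `i₀` replaced by row `i` of `B`. Unimodularity and `gcd c = 1` then force
`c ∈ {0, ±1}^n`, and the same identity shows that every `x ∈ ℝL` vanishing off the support of `c`
is a multiple of `c`. Hence for `u = (a + b) / 2` the face `F_u` contains `a` and `b` and lies on
the line through them.

Conversely, if `a` and `b` lie on `F_u`, then `|c_i| ≤ 1` since `⌈u_i⌉ - ⌊u_i⌋ ≤ 1`. If `w ∈ L`
has support inside that of `c`, a small multiple of `w` can be added to and subtracted from the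
midpoint of `a` and `b` without leaving `F_u`, so `w` lies in the direction of `F_u`, which is
the line spanned by `c` when `F_u` is one-dimensional.
-/

open Matrix

theorem Matrix.exists_isUnit_submatrix_of_injective_mulVec {ι n K : Type*} [Finite ι]
    [Fintype n] [DecidableEq n] [Field K] {A : Matrix ι n K} (hA : Function.Injective A.mulVec) :
    ∃ r : n ↪ ι, IsUnit (A.submatrix r id) := by
  obtain ⟨κ, a, ha, hspan, hli⟩ := exists_linearIndependent' K A.row
  have := Finite.of_injective a ha
  have := Fintype.ofFinite κ
  have hcard : Fintype.card κ = Fintype.card n := by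
    rw [← finrank_span_eq_card hli, hspan, ← rank_eq_finrank_span_row, Matrix.rank,
      LinearMap.finrank_range_of_inj hA, Module.finrank_fintype_fun_eq_card]
  let e : n ≃ κ := (Fintype.equivOfCardEq hcard).symm
  exact ⟨e.toEmbedding.trans ⟨a, ha⟩, linearIndependent_rows_iff_isUnit.mp (hli.comp e e.injective)⟩

theorem Matrix.injective_mulVec_map_of_injective {ι n R K : Type*} [Fintype n] [CommRing R]
    [IsDomain R] [Field K] [Algebra R K] [IsFractionRing R K] {B : Matrix ι n R}
    (hB : Function.Injective B.mulVec) : Function.Injective (B.map (algebraMap R K)).mulVec := by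
  rw [Matrix.mulVec_injective_iff] at hB ⊢
  have hcast : LinearMap.ker (LinearMap.compLeft (Algebra.linearMap R K) ι) = ⊥ :=
    LinearMap.ker_eq_bot.mpr fun _ _ h => funext fun i =>
      IsFractionRing.injective R K (congrFun h i)
  exact (LinearIndependent.iff_fractionRing R K).mp (hB.map' _ hcast)

theorem Matrix.det_submatrix_mul_mulVec_apply {ι n R : Type*} [Fintype n] [DecidableEq n]
    [CommRing R] (B : Matrix ι n R) (r : n → ι) (p : n) {x : n → R}
    (hx : ∀ q ≠ p, (B *ᵥ x) (r q) = 0) (i : ι) :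
    (B.submatrix r id).det * (B *ᵥ x) i =
      (B *ᵥ x) (r p) * ((B.submatrix r id).updateRow p (B i)).det := by
  set M := B.submatrix r id
  have hMx : M *ᵥ x = Pi.single p ((B *ᵥ x) (r p)) := by
    funext q
    change (B *ᵥ x) (r q) = _
    by_cases hq : q = p
    · simp [hq]
    · rw [Pi.single_eq_of_ne hq, hx q hq]
  have hadj : M.det • x = (B *ᵥ x) (r p) • fun k => M.adjugate k p := by
    have : M.det • x = M.adjugate *ᵥ (M *ᵥ x) := by
      rw [mulVec_mulVec, adjugate_mul, smul_mulVec, one_mulVec]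
    rw [this, hMx, mulVec_single]
    funext k; simp [mul_comm]
  have hcramer : (M.updateRow p (B i)).det = B i ⬝ᵥ fun k => M.adjugate k p := by
    rw [← cramer_transpose_apply, cramer_eq_adjugate_mulVec, ← adjugate_transpose]
    simp [Matrix.mulVec, dotProduct, mul_comm]
  calc M.det * (B *ᵥ x) i = B i ⬝ᵥ (M.det • x) := by
        rw [dotProduct_smul, smul_eq_mul]; rfl
    _ = _ := by rw [hadj, dotProduct_smul, hcramer, smul_eq_mul]

theorem Matrix.mulVec_apply_smul_mulVec_comm {ι n R : Type*} [Fintype n] [DecidableEq n]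
    [CommRing R] [IsDomain R] (B : Matrix ι n R) (r : n → ι) (p : n)
    (hdet : (B.submatrix r id).det ≠ 0) {x y : n → R}
    (hx : ∀ q ≠ p, (B *ᵥ x) (r q) = 0) (hy : ∀ q ≠ p, (B *ᵥ y) (r q) = 0) :
    (B *ᵥ x) (r p) • (B *ᵥ y) = (B *ᵥ y) (r p) • (B *ᵥ x) := by
  funext i
  refine mul_left_cancel₀ hdet ?_
  simp only [Pi.smul_apply, smul_eq_mul]
  linear_combination (B *ᵥ x) (r p) * B.det_submatrix_mul_mulVec_apply r p hy i -
    (B *ᵥ y) (r p) * B.det_submatrix_mul_mulVec_apply r p hx i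

theorem Matrix.submatrix_update_eq_updateRow {ι n R : Type*} [DecidableEq n] (B : Matrix ι n R)
    (r : n → ι) (p : n) (i : ι) :
    B.submatrix (Function.update r p i) id = (B.submatrix r id).updateRow p (B i) := by
  ext q j
  by_cases hq : q = p
  · subst hq; simp
  · simp [hq]

theorem midpoint_intCast (s t : ℤ) : midpoint ℝ (s : ℝ) t = (s + t) / 2 := by
  rw [midpoint_eq_smul_add]; simp; ring

theorem floor_midpoint_intCast {s t : ℤ} (h : |s - t| ≤ 1) :
    ⌊midpoint ℝ (s : ℝ) t⌋ = min s t := by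
  wlog hst : s ≤ t generalizing s t
  · rw [midpoint_comm, min_comm]; exact this (abs_sub_comm s t ▸ h) (by omega)
  have : (t : ℝ) ≤ s + 1 := by exact_mod_cast (by linarith [(abs_le.mp h).1] : t ≤ s + 1)
  have : (s : ℝ) ≤ t := by exact_mod_cast hst
  rw [min_eq_left hst, Int.floor_eq_iff, midpoint_intCast]
  constructor <;> linarith

theorem ceil_midpoint_intCast {s t : ℤ} (h : |s - t| ≤ 1) :
    ⌈midpoint ℝ (s : ℝ) t⌉ = max s t := by
  wlog hst : s ≤ t generalizing s t
  · rw [midpoint_comm, max_comm]; exact this (abs_sub_comm s t ▸ h) (by omega)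
  have : (t : ℝ) ≤ s + 1 := by exact_mod_cast (by linarith [(abs_le.mp h).1] : t ≤ s + 1)
  have : (s : ℝ) ≤ t := by exact_mod_cast hst
  rw [max_eq_right hst, Int.ceil_eq_iff, midpoint_intCast]
  constructor <;> linarith

theorem abs_sub_le_one_of_mem_Icc_floor_ceil {v s t : ℝ} (hs : s ∈ Set.Icc (⌊v⌋ : ℝ) ⌈v⌉)
    (ht : t ∈ Set.Icc (⌊v⌋ : ℝ) ⌈v⌉) : |s - t| ≤ 1 := by
  have : (⌈v⌉ : ℝ) ≤ ⌊v⌋ + 1 := by exact_mod_cast Int.ceil_le_floor_add_one v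
  rw [abs_le]
  constructor <;> linarith [hs.1, hs.2, ht.1, ht.2]

theorem midpoint_add_mem_Icc_floor_ceil {v e : ℝ} {s t : ℤ} (hs : (s : ℝ) ∈ Set.Icc (⌊v⌋ : ℝ) ⌈v⌉)
    (ht : (t : ℝ) ∈ Set.Icc (⌊v⌋ : ℝ) ⌈v⌉) (hst : s ≠ t) (he : |e| ≤ 1 / 2) :
    midpoint ℝ (s : ℝ) t + e ∈ Set.Icc (⌊v⌋ : ℝ) ⌈v⌉ := by
  obtain ⟨hs₁, hs₂⟩ := hs
  obtain ⟨ht₁, ht₂⟩ := ht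
  norm_cast at hs₁ hs₂ ht₁ ht₂
  have hceil := Int.ceil_le_floor_add_one v
  -- two distinct integers in an interval of length at most one are its endpoints
  have hsum : ((s + t : ℤ) : ℝ) = ⌊v⌋ + ⌈v⌉ := by exact_mod_cast (by omega : s + t = ⌊v⌋ + ⌈v⌉)
  have hlen : (⌈v⌉ : ℝ) = ⌊v⌋ + 1 := by exact_mod_cast (by omega : ⌈v⌉ = ⌊v⌋ + 1)
  push_cast at hsum
  rw [midpoint_intCast]
  constructor <;> linarith [abs_le.mp he]

theorem Finset.gcd_eq_one_of_abs_le_one {ι : Type*} [Fintype ι] {c : ι → ℤ} (hc : c ≠ 0)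
    (h : ∀ i, |c i| ≤ 1) : Finset.univ.gcd c = 1 := by
  obtain ⟨i, hi⟩ := Function.ne_iff.mp hc
  have hunit : IsUnit (c i) := Int.isUnit_iff_abs_eq.mpr (le_antisymm (h i) (Int.one_le_abs hi))
  rw [← Finset.normalize_gcd, normalize_eq_one]
  exact isUnit_of_dvd_unit (Finset.gcd_dvd (Finset.mem_univ i)) hunit

theorem finrank_vectorSpan_eq_one {k V : Type*} [Field k] [AddCommGroup V] [Module k V]
    {s : Set V} {x y : V} (hx : x ∈ s) (hy : y ∈ s) (hxy : x ≠ y)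
    (h : vectorSpan k s ≤ k ∙ (x - y)) : Module.finrank k (vectorSpan k s) = 1 := by
  rw [le_antisymm h ((Submodule.span_singleton_le_iff_mem _ _).mpr (vsub_mem_vectorSpan k hx hy)),
    finrank_span_singleton (sub_ne_zero.mpr hxy)]

section

variable {n : ℕ} {L : Submodule ℤ (Fin n → ℤ)}

theorem intCastVec_injective : Function.Injective (intCastVec (n := n)) :=
  fun _ _ h => funext fun i => Int.cast_injective (congrFun h i)

theorem intCastVec_sub (a b : Fin n → ℤ) : intCastVec (a - b) = intCastVec a - intCastVec b := by
  funext i; simp [intCastVec]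

theorem intCastVec_mulVec {m : ℕ} (B : Matrix (Fin n) (Fin m) ℤ) (x : Fin m → ℤ) :
    intCastVec (B *ᵥ x) = B.map (Int.castRingHom ℝ) *ᵥ (Int.cast ∘ x) :=
  funext fun i => RingHom.map_mulVec (Int.castRingHom ℝ) B x i

theorem intCastVec_mem_realSpan {v : Fin n → ℤ} (hv : v ∈ L) : intCastVec v ∈ realSpan L :=
  Submodule.subset_span ⟨v, hv, rfl⟩

theorem realSpan_range_le {m : ℕ} (B : Matrix (Fin n) (Fin m) ℤ) :
    realSpan (LinearMap.range B.mulVecLin) ≤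
      LinearMap.range (B.map (Int.castRingHom ℝ)).mulVecLin := by
  rw [realSpan, Submodule.span_le]
  rintro _ ⟨_, ⟨x, rfl⟩, rfl⟩
  exact ⟨Int.cast ∘ x, (intCastVec_mulVec B x).symm⟩

theorem midpoint_mem_realSpan {x y : Fin n → ℝ} (hx : x ∈ realSpan L) (hy : y ∈ realSpan L) :
    midpoint ℝ x y ∈ realSpan L := by
  rw [midpoint_eq_smul_add]
  exact Submodule.smul_mem _ _ (add_mem hx hy)

theorem IsCircuit.exists_submatrix_det_ne_zero {m : ℕ} {B : Matrix (Fin n) (Fin m) ℤ}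
    (hB : Function.Injective B.mulVec) {c : Fin n → ℤ}
    (hc : IsCircuit (LinearMap.range B.mulVecLin) c) :
    ∃ (r : Fin m ↪ Fin n) (p : Fin m),
      (B.submatrix r id).det ≠ 0 ∧ c (r p) ≠ 0 ∧ ∀ q ≠ p, c (r q) = 0 := by
  obtain ⟨⟨x, hx⟩, hc0, -, hmin⟩ := hc
  rw [mulVecLin_apply] at hx
  subst hx
  obtain ⟨i₀, hi₀⟩ := Function.ne_iff.mp hc0
  let Z : Set (Fin n) := {i | (B *ᵥ x) i = 0 ∨ i = i₀}
  -- a vector of `L` vanishing on `Z` has support strictly inside that of the circuit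
  have hZ : Function.Injective (B.submatrix ((↑) : Z → Fin n) id).mulVec := by
    rw [← coe_mulVecLin, injective_iff_map_eq_zero]
    intro y hy
    have hBy : ∀ i ∈ Z, (B *ᵥ y) i = 0 := fun i hi => congrFun hy ⟨i, hi⟩
    by_contra hy0
    have hw0 : B *ᵥ y ≠ 0 := fun h => hy0 (hB (h.trans (mulVec_zero B).symm))
    have hsupp := hmin _ ⟨y, rfl⟩ hw0 fun i hi hci => hi (hBy i (Or.inl hci))
    exact (hsupp.symm ▸ hi₀ : i₀ ∈ {i | (B *ᵥ y) i ≠ 0}) (hBy i₀ (Or.inr rfl))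
  obtain ⟨r₀, hr₀⟩ := exists_isUnit_submatrix_of_injective_mulVec
    (injective_mulVec_map_of_injective (K := ℚ) hZ)
  let r := r₀.trans (Function.Embedding.subtype Z)
  have hdet : (B.submatrix r id).det ≠ 0 := by
    have h := (isUnit_iff_isUnit_det _).mp hr₀
    rw [submatrix_map, submatrix_submatrix, ← RingHom.mapMatrix_apply, ← RingHom.map_det] at h
    exact fun h0 => h.ne_zero ((congrArg (algebraMap ℤ ℚ) h0).trans (map_zero _))
  have hrZ : ∀ q, (B *ᵥ x) (r q) = 0 ∨ r q = i₀ := fun q => (r₀ q).2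
  obtain ⟨p, hp⟩ : ∃ p, r p = i₀ := by
    by_contra! h
    refine hc0 ?_
    have hx0 : x = 0 :=
      eq_zero_of_mulVec_eq_zero hdet <| funext fun q => (hrZ q).resolve_right (h q)
    rw [hx0, mulVec_zero]
  refine ⟨r, p, hdet, hp ▸ hi₀, fun q hq => (hrZ q).resolve_right ?_⟩
  exact fun h => hq (r.injective (h.trans hp.symm))

theorem IsCircuit.abs_le_one (hL : IsUnimodular L) {c : Fin n → ℤ} (hc : IsCircuit L c)
    (i : Fin n) : |c i| ≤ 1 := by
  obtain ⟨m, B, hind, hminor, rfl⟩ := hL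
  have habs_minor : ∀ r : Fin m ↪ Fin n, |(B.submatrix r id).det| ≤ 1 := fun r => by
    rcases hminor r with h | h | h <;> rw [h] <;> norm_num
  obtain ⟨r, p, hdet, hcp, hzero⟩ :=
    hc.exists_submatrix_det_ne_zero (mulVec_injective_iff.mpr hind)
  obtain ⟨⟨x, rfl⟩, -, hgcd, -⟩ := hc
  have hcramer := B.det_submatrix_mul_mulVec_apply r p hzero
  have hunit : IsUnit (B.submatrix r id).det :=
    Int.isUnit_iff_abs_eq.mpr (le_antisymm (habs_minor r) (Int.one_le_abs hdet))
  have hdvd : ∀ j, (B *ᵥ x) (r p) ∣ (B *ᵥ x) j := fun j =>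
    hunit.dvd_mul_left.mp ⟨_, hcramer j⟩
  have hcp_unit : |(B *ᵥ x) (r p)| = 1 :=
    Int.isUnit_iff_abs_eq.mp (isUnit_of_dvd_one (hgcd ▸ Finset.dvd_gcd fun j _ => hdvd j))
  by_cases hci : (B *ᵥ x) i = 0
  · simp [hci]
  have hinj : Function.Injective (Function.update r p i) := by
    intro q q' h
    simp only [Function.update_apply] at h
    split_ifs at h with hq hq' hq'
    · rw [hq, hq']
    · exact absurd (h ▸ hzero q' hq') hci
    · exact absurd (h ▸ hzero q hq) hci
    · exact r.injective h
  have := congrArg abs (hcramer i)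
  rw [abs_mul, abs_mul, Int.isUnit_iff_abs_eq.mp hunit, hcp_unit, one_mul, one_mul,
    ← submatrix_update_eq_updateRow] at this
  exact this ▸ habs_minor ⟨_, hinj⟩

theorem IsCircuit.exists_eq_smul_of_support_subset {m : ℕ} {B : Matrix (Fin n) (Fin m) ℤ}
    (hB : Function.Injective B.mulVec) {c : Fin n → ℤ}
    (hc : IsCircuit (LinearMap.range B.mulVecLin) c) {x : Fin n → ℝ}
    (hx : x ∈ realSpan (LinearMap.range B.mulVecLin)) (hsupp : ∀ j, c j = 0 → x j = 0) :
    ∃ t : ℝ, x = t • intCastVec c := by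
  obtain ⟨r, p, hdet, hcp, hzero⟩ := hc.exists_submatrix_det_ne_zero hB
  obtain ⟨⟨x₀, rfl⟩, -⟩ := hc
  obtain ⟨y, rfl⟩ := realSpan_range_le B hx
  simp only [mulVecLin_apply] at hcp hzero hsupp ⊢
  set BR := B.map (Int.castRingHom ℝ)
  have hBR : (BR.submatrix r id).det ≠ 0 := by
    rw [submatrix_map, ← RingHom.mapMatrix_apply, ← RingHom.map_det, eq_intCast]
    exact_mod_cast hdet
  have hcR : intCastVec (B *ᵥ x₀) = BR *ᵥ (Int.cast ∘ x₀) := intCastVec_mulVec B x₀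
  have hprop := BR.mulVec_apply_smul_mulVec_comm r p hBR (x := Int.cast ∘ x₀) (y := y)
    (fun q hq => by simp [← hcR, intCastVec, hzero q hq])
    (fun q hq => hsupp _ (hzero q hq))
  rw [← hcR] at hprop
  have hcpR : intCastVec (B *ᵥ x₀) (r p) ≠ 0 := by simpa [intCastVec] using hcp
  refine ⟨(BR *ᵥ y) (r p) / intCastVec (B *ᵥ x₀) (r p), ?_⟩
  rw [div_eq_inv_mul, mul_smul, ← hprop, smul_smul, inv_mul_cancel₀ hcpR, one_smul]

theorem intCastVec_mem_closedFace_midpoint {a b : Fin n → ℤ} (ha : a ∈ L)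
    (hab : ∀ i, |a i - b i| ≤ 1) :
    intCastVec a ∈ closedFace L (midpoint ℝ (intCastVec a) (intCastVec b)) := by
  refine ⟨intCastVec_mem_realSpan ha, fun i => ?_⟩
  simp only [pi_midpoint_apply, intCastVec, floor_midpoint_intCast (hab i),
    ceil_midpoint_intCast (hab i)]
  exact ⟨by exact_mod_cast min_le_left _ _, by exact_mod_cast le_max_left _ _⟩

theorem eq_of_mem_closedFace_midpoint {a b : Fin n → ℤ} {x : Fin n → ℝ}
    (hx : x ∈ closedFace L (midpoint ℝ (intCastVec a) (intCastVec b))) {i : Fin n}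
    (hi : a i = b i) : x i = a i := by
  have := hx.2 i
  simp only [pi_midpoint_apply, intCastVec, hi, midpoint_self, Int.floor_intCast,
    Int.ceil_intCast] at this
  rw [hi]
  exact le_antisymm this.2 this.1

theorem IsCircuit.vectorSpan_closedFace_midpoint_le {m : ℕ} {B : Matrix (Fin n) (Fin m) ℤ}
    (hB : Function.Injective B.mulVec) {a b : Fin n → ℤ}
    (hc : IsCircuit (LinearMap.range B.mulVecLin) (a - b)) :
    vectorSpan ℝ (closedFace (LinearMap.range B.mulVecLin)
      (midpoint ℝ (intCastVec a) (intCastVec b))) ≤ ℝ ∙ intCastVec (a - b) := by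
  rw [vectorSpan_def, Submodule.span_le]
  rintro _ ⟨x, hx, y, hy, rfl⟩
  obtain ⟨t, ht⟩ := hc.exists_eq_smul_of_support_subset hB (sub_mem hx.1 hy.1) fun j hj => by
    have hj' : a j = b j := sub_eq_zero.mp hj
    simp [eq_of_mem_closedFace_midpoint hx hj', eq_of_mem_closedFace_midpoint hy hj']
  exact Submodule.mem_span_singleton.mpr ⟨t, ht.symm⟩

theorem midpoint_add_mem_closedFace {u : Fin n → ℝ} {a b : Fin n → ℤ}
    (haF : intCastVec a ∈ closedFace L u) (hbF : intCastVec b ∈ closedFace L u)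
    {d : Fin n → ℝ} (hd : d ∈ realSpan L) (hd_le : ∀ i, |d i| ≤ 1 / 2)
    (hd_supp : ∀ i, a i = b i → d i = 0) :
    midpoint ℝ (intCastVec a) (intCastVec b) + d ∈ closedFace L u := by
  refine ⟨add_mem (midpoint_mem_realSpan haF.1 hbF.1) hd, fun i => ?_⟩
  simp only [Pi.add_apply, pi_midpoint_apply]
  by_cases hi : a i = b i
  · simpa [hd_supp i hi, intCastVec, hi] using hbF.2 i
  · exact midpoint_add_mem_Icc_floor_ceil (haF.2 i) (hbF.2 i) hi (hd_le i)

theorem exists_smul_eq_of_finrank_vectorSpan_closedFace_eq_one {u : Fin n → ℝ} {a b : Fin n → ℤ}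
    (haF : intCastVec a ∈ closedFace L u) (hbF : intCastVec b ∈ closedFace L u) (hab : a ≠ b)
    (hdim : Module.finrank ℝ (vectorSpan ℝ (closedFace L u)) = 1) {w : Fin n → ℝ}
    (hw : w ∈ realSpan L) (hsupp : ∀ i, a i = b i → w i = 0) :
    ∃ t : ℝ, t • intCastVec (a - b) = w := by
  rcases eq_or_ne w 0 with rfl | hw0
  · exact ⟨0, zero_smul _ _⟩
  set d := (2 * ‖w‖)⁻¹ • w
  have hd_le : ∀ i, |d i| ≤ 1 / 2 := fun i => by
    have hnorm : 0 < ‖w‖ := norm_pos_iff.mpr hw0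
    calc |d i| = (2 * ‖w‖)⁻¹ * ‖w i‖ := by simp [d, abs_mul, abs_of_pos hnorm]
      _ ≤ (2 * ‖w‖)⁻¹ * ‖w‖ := by gcongr; exact norm_le_pi_norm w i
      _ = 1 / 2 := by field_simp
  have hd := midpoint_add_mem_closedFace haF hbF (Submodule.smul_mem _ _ hw) hd_le
    fun i hi => by simp [hsupp i hi]
  have hnd := midpoint_add_mem_closedFace haF hbF (Submodule.neg_mem _ (Submodule.smul_mem _ _ hw))
    (fun i => by rw [Pi.neg_apply, abs_neg]; exact hd_le i) fun i hi => by simp [hsupp i hi]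
  have hc : intCastVec (a - b) ∈ vectorSpan ℝ (closedFace L u) :=
    intCastVec_sub a b ▸ vsub_mem_vectorSpan ℝ haF hbF
  have hc0 : (⟨_, hc⟩ : vectorSpan ℝ (closedFace L u)) ≠ 0 := by
    simpa [intCastVec_sub, sub_eq_zero] using intCastVec_injective.ne hab
  obtain ⟨t, ht⟩ := (finrank_eq_one_iff_of_nonzero' _ hc0).mp hdim ⟨_, vsub_mem_vectorSpan ℝ hd hnd⟩
  refine ⟨‖w‖ * t, ?_⟩
  have ht' : t • intCastVec (a - b) = ‖w‖⁻¹ • w := by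
    have := congrArg Subtype.val ht
    simp only [SetLike.val_smul, vsub_eq_sub, add_sub_add_left_eq_sub, sub_neg_eq_add] at this
    rw [this, ← two_smul ℝ d, smul_smul]
    field_simp
  rw [mul_smul, ht', smul_smul, mul_inv_cancel₀ (norm_ne_zero_iff.mpr hw0), one_smul]

theorem isCircuit_sub_of_finrank_vectorSpan_closedFace_eq_one {u : Fin n → ℝ} {a b : Fin n → ℤ}
    (ha : a ∈ L) (hb : b ∈ L) (hab : a ≠ b) (haF : intCastVec a ∈ closedFace L u)
    (hbF : intCastVec b ∈ closedFace L u)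
    (hdim : Module.finrank ℝ (vectorSpan ℝ (closedFace L u)) = 1) : IsCircuit L (a - b) := by
  have hle : ∀ i, |(a - b) i| ≤ 1 := fun i => by
    have := abs_sub_le_one_of_mem_Icc_floor_ceil (haF.2 i) (hbF.2 i)
    simp only [intCastVec] at this
    exact_mod_cast this
  refine ⟨sub_mem ha hb, sub_ne_zero.mpr hab,
    Finset.gcd_eq_one_of_abs_le_one (sub_ne_zero.mpr hab) hle, fun w hw hw0 hsub => ?_⟩
  have hw_supp : ∀ i, a i = b i → w i = 0 := fun i hi =>
    by_contra fun hwi => hsub hwi (sub_eq_zero.mpr hi)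
  obtain ⟨t, ht⟩ := exists_smul_eq_of_finrank_vectorSpan_closedFace_eq_one haF hbF hab hdim
    (intCastVec_mem_realSpan hw) fun i hi => by simp [intCastVec, hw_supp i hi]
  have ht0 : t ≠ 0 := by
    rintro rfl
    exact hw0 (intCastVec_injective (by rw [← ht, zero_smul]; funext i; simp [intCastVec]))
  refine hsub.antisymm fun i hi hwi => hi ?_
  have := congrFun ht i
  simp only [Pi.smul_apply, intCastVec, hwi, smul_eq_mul, Int.cast_zero, mul_eq_zero, ht0,
    false_or] at this
  exact_mod_cast this

end

/-- for distinct `a, b` in a unimodular lattice `L`, the difference `a - b` is a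
circuit of `L` iff `a` and `b` lie on a common closed face of `H_L` of affine dimension `1`. -/
theorem circuit_iff_common_one_dimensional_face
    {n : ℕ} (L : Submodule ℤ (Fin n → ℤ)) (hL : IsUnimodular L)
    (a b : Fin n → ℤ) (ha : a ∈ L) (hb : b ∈ L) (hab : a ≠ b) :
    IsCircuit L (a - b) ↔
    ∃ u : Fin n → ℝ, u ∈ realSpan L ∧
      intCastVec a ∈ closedFace L u ∧ intCastVec b ∈ closedFace L u ∧
      Module.finrank ℝ (affineSpan ℝ (closedFace L u)).direction = 1 := by
  constructor
  · intro hc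
    have hab₁ : ∀ i, |a i - b i| ≤ 1 := hc.abs_le_one hL
    have haF := intCastVec_mem_closedFace_midpoint (b := b) ha hab₁
    have hbF := midpoint_comm (R := ℝ) (intCastVec b) (intCastVec a) ▸
      intCastVec_mem_closedFace_midpoint hb fun i => abs_sub_comm (a i) (b i) ▸ hab₁ i
    refine ⟨_, midpoint_mem_realSpan haF.1 hbF.1, haF, hbF, ?_⟩
    obtain ⟨m, B, hind, -, rfl⟩ := hL
    rw [direction_affineSpan]
    refine finrank_vectorSpan_eq_one haF hbF (intCastVec_injective.ne hab) ?_
    rw [← intCastVec_sub]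
    exact hc.vectorSpan_closedFace_midpoint_le (mulVec_injective_iff.mpr hind)
  · rintro ⟨u, -, haF, hbF, hdim⟩
    rw [direction_affineSpan] at hdim
    exact isCircuit_sub_of_finrank_vectorSpan_closedFace_eq_one ha hb hab haF hbF hdim
end

section
/- Let L be a unimodular subgroup of ℤ^n. Then for every u in the real span ℝL of L there exists a lattice point v ∈ L with ⌊u_i⌋ ≤ v_i ≤ ⌈u_i⌉ for all i = 1,…,n; that is, every closed face of the arrangement H_L contains a point of L. -/
/-!
Write `u = A x` with `A` the matrix `B` over `ℝ`. The polytope `{y | ⌊u⌋ ≤ A y ≤ ⌈u⌉}` contains `x`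
and, `A` being injective, has a vertex `y`: moving along a direction that fixes the rows where `A y`
meets a bound, until one more row meets one, makes the set of these tight rows grow. At a vertex the
tight rows determine `y`, and they take integer values because the bounds are integers. Some `m` of
them have a nonzero minor, which is `±1`, so Cramer's rule makes `y` integral, and `B y ∈ L`.
-/

section Vertex

variable {K E ι : Type*} [Field K] [LinearOrder K]

/-- The step `s ≥ 0` at which `a + s * c` reaches the end of `[l, u]` that it moves towards. -/
def exitTime (l u a c : K) : K := if 0 < c then (u - a) / c else (l - a) / c

theorem add_exitTime_mul_eq {l u a c : K} (hc : c ≠ 0) :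
    a + exitTime l u a c * c = l ∨ a + exitTime l u a c * c = u := by
  unfold exitTime
  split_ifs
  · right; field_simp; ring
  · left; field_simp; ring

variable [IsStrictOrderedRing K]

theorem exitTime_nonneg {l u a : K} (c : K) (ha : a ∈ Set.Icc l u) : 0 ≤ exitTime l u a c := by
  unfold exitTime
  split_ifs with hc
  · exact div_nonneg (sub_nonneg.2 ha.2) hc.le
  · exact div_nonneg_of_nonpos (sub_nonpos.2 ha.1) (not_lt.1 hc)

theorem add_mul_mem_Icc_of_le_exitTime {l u a c s : K} (ha : a ∈ Set.Icc l u) (hs₀ : 0 ≤ s)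
    (hs : s ≤ exitTime l u a c) : a + s * c ∈ Set.Icc l u := by
  obtain ⟨hla, hau⟩ := ha
  unfold exitTime at hs
  rcases lt_trichotomy c 0 with hc | rfl | hc
  · rw [if_neg hc.not_gt, le_div_iff_of_neg hc] at hs
    constructor <;> nlinarith
  · simpa using And.intro hla hau
  · rw [if_pos hc, le_div_iff₀ hc] at hs
    constructor <;> nlinarith

variable [Fintype ι]

def tightRows (l u v : ι → K) : Finset ι := {i | v i = l i ∨ v i = u i}

variable [AddCommGroup E] [Module K E]

theorem exists_tightRows_ssubset (f : E →ₗ[K] ι → K) {l u : ι → K} {x d : E}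
    (hx : f x ∈ Set.Icc l u) (hd : f d ≠ 0) (hdx : ∀ i ∈ tightRows l u (f x), f d i = 0) :
    ∃ x', f x' ∈ Set.Icc l u ∧ tightRows l u (f x) ⊂ tightRows l u (f x') := by
  have hxi : ∀ i, f x i ∈ Set.Icc (l i) (u i) := fun i => ⟨hx.1 i, hx.2 i⟩
  set t : ι → K := fun i => exitTime (l i) (u i) (f x i) (f d i)
  obtain ⟨i₀, hd₀⟩ : ∃ i, f d i ≠ 0 := Function.ne_iff.mp hd
  obtain ⟨i₁, hi₁, hmin⟩ := Finset.exists_min_image {i | f d i ≠ 0} t ⟨i₀, by simpa using hd₀⟩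
  rw [Finset.mem_filter_univ] at hi₁
  have hfx' : ∀ i, f (x + t i₁ • d) i = f x i + t i₁ * f d i := by simp
  have hbox : ∀ i, f (x + t i₁ • d) i ∈ Set.Icc (l i) (u i) := by
    intro i
    rw [hfx']
    by_cases hdi : f d i = 0
    · simpa [hdi] using hxi i
    · exact add_mul_mem_Icc_of_le_exitTime (hxi i) (exitTime_nonneg _ (hxi i₁))
        (hmin i ((Finset.mem_filter_univ i).mpr hdi))
  have hsub : tightRows l u (f x) ⊆ tightRows l u (f (x + t i₁ • d)) := by
    intro i hi
    have hdi := hdx i hi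
    simp only [tightRows, Finset.mem_filter_univ, hfx', hdi, mul_zero, add_zero] at hi ⊢
    exact hi
  refine ⟨x + t i₁ • d, ⟨fun i => (hbox i).1, fun i => (hbox i).2⟩,
    (Finset.ssubset_iff_of_subset hsub).mpr ⟨i₁, ?_, fun h => hi₁ (hdx i₁ h)⟩⟩
  simpa only [tightRows, Finset.mem_filter_univ, hfx'] using add_exitTime_mul_eq hi₁

theorem exists_vertex_of_injective (f : E →ₗ[K] ι → K) (hf : Function.Injective f) {l u : ι → K}
    {x : E} (hx : f x ∈ Set.Icc l u) :
    ∃ y, f y ∈ Set.Icc l u ∧ ∀ d, (∀ i ∈ tightRows l u (f y), f d i = 0) → d = 0 := by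
  induction h : Fintype.card ι - (tightRows l u (f x)).card using Nat.strong_induction_on
    generalizing x with
  | _ k ih =>
  by_cases hvertex : ∀ d, (∀ i ∈ tightRows l u (f x), f d i = 0) → d = 0
  · exact ⟨x, hx, hvertex⟩
  push Not at hvertex
  obtain ⟨d, hdx, hd⟩ := hvertex
  obtain ⟨x', hx', hsub⟩ :=
    exists_tightRows_ssubset f hx ((map_ne_zero_iff f hf).mpr hd) hdx
  have hlt := Finset.card_lt_card hsub
  have hle := Finset.card_le_univ (tightRows l u (f x'))
  exact ih _ (by omega) hx' rfl

end Vertex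

namespace Matrix

variable {K ι : Type*} [Field K] {m : ℕ}

theorem span_image_eq_top_of_mulVec_eq_zero [Fintype ι] (M : Matrix ι (Fin m) K) (T : Set ι)
    (hT : ∀ d, (∀ i ∈ T, (M *ᵥ d) i = 0) → d = 0) : Submodule.span K (M '' T) = ⊤ := by
  set N : Matrix T (Fin m) K := M.submatrix (↑) id
  have hN : Function.Injective N.mulVecLin :=
    (injective_iff_map_eq_zero _).mpr fun d hd => hT d fun i hi => congrFun hd ⟨i, hi⟩
  have hrank : N.rank = m := by
    rw [rank, LinearMap.finrank_range_of_inj hN, Module.finrank_fin_fun]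
  have himage : M '' T = Set.range N.row := Set.image_eq_range _ _
  apply Submodule.eq_top_of_finrank_eq
  rw [Module.finrank_fin_fun, himage, ← rank_eq_finrank_span_row, hrank]

theorem exists_det_submatrix_ne_zero (M : Matrix ι (Fin m) K) {T : Set ι}
    (hT : Submodule.span K (M '' T) = ⊤) :
    ∃ r : Fin m ↪ ι, (∀ j, r j ∈ T) ∧ (M.submatrix r id).det ≠ 0 := by
  obtain ⟨g, hgT, -, hg⟩ := Submodule.exists_fun_fin_finrank_span_eq K (M '' T)
  have hk : Module.finrank K (Submodule.span K (M '' T)) = m := by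
    rw [hT, finrank_top, Module.finrank_fin_fun]
  choose r hrT hr using fun j : Fin m => hgT (Fin.cast hk.symm j)
  have hrows : LinearIndependent K fun j => M (r j) := by
    simpa only [Function.comp_def, ← hr] using hg.comp _ (Fin.cast_injective hk.symm)
  refine ⟨⟨r, hrows.injective.of_comp⟩, hrT, ?_⟩
  exact ((isUnit_iff_isUnit_det _).mp (linearIndependent_rows_iff_isUnit.mp hrows)).ne_zero

theorem eq_intCast_comp_of_isUnit_det {κ R : Type*} [Fintype κ] [DecidableEq κ] [CommRing R]
    {C : Matrix κ κ ℤ} (hC : IsUnit C.det) {x : κ → R} {w : κ → ℤ}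
    (hx : C.map (Int.cast : ℤ → R) *ᵥ x = Int.cast ∘ w) : x = Int.cast ∘ (C⁻¹ *ᵥ w) := by
  let φ := Int.castRingHom R
  calc x = (C⁻¹ * C).map φ *ᵥ x := by
        rw [nonsing_inv_mul C hC, Matrix.map_one _ φ.map_zero φ.map_one, one_mulVec]
    _ = C⁻¹.map φ *ᵥ (Int.cast ∘ w) := by
        rw [Matrix.map_mul, ← mulVec_mulVec]
        exact congrArg _ hx
    _ = Int.cast ∘ (C⁻¹ *ᵥ w) := funext fun i => (φ.map_mulVec _ _ i).symm

theorem mulVec_map_intCast_injective {S κ : Type*} [CommRing S] [IsDomain S] [CharZero S]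
    [Finite ι] [Fintype κ] {B : Matrix ι κ ℤ} (hB : LinearIndependent ℤ Bᵀ) :
    Function.Injective (B.map (Int.cast : ℤ → S)).mulVec :=
  have hcol : (B.map (Int.cast : ℤ → S)).col = fun j => algebraMap ℤ S ∘ Bᵀ j := rfl
  mulVec_injective_iff.mpr (hcol ▸ linearIndependent_algebraMap_comp_iff.mpr hB)

theorem exists_intCast_comp_eq_of_det_submatrix_mem [Fintype ι] (B : Matrix ι (Fin m) ℤ)
    (hB : ∀ r : Fin m ↪ ι, (B.submatrix r id).det ∈ ({0, 1, -1} : Set ℤ)) (T : Set ι)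
    (hT : ∀ d, (∀ i ∈ T, (B.map (Int.cast : ℤ → K) *ᵥ d) i = 0) → d = 0) {y : Fin m → K}
    (hy : ∀ i ∈ T, (B.map (Int.cast : ℤ → K) *ᵥ y) i ∈ Set.range (Int.cast : ℤ → K)) :
    ∃ z : Fin m → ℤ, Int.cast ∘ z = y := by
  obtain ⟨r, hrT, hr⟩ :=
    exists_det_submatrix_ne_zero _ (span_image_eq_top_of_mulVec_eq_zero _ T hT)
  have hmap : (B.map (Int.cast : ℤ → K)).submatrix r id =
      (Int.castRingHom K).mapMatrix (B.submatrix r id) := rfl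
  have hunit : IsUnit (B.submatrix r id).det := by
    rcases hB r with h | h | h
    · rw [hmap, ← RingHom.map_det, h, map_zero] at hr
      exact absurd rfl hr
    · exact h ▸ isUnit_one
    · exact h ▸ isUnit_one.neg
  choose w hw using fun j => hy (r j) (hrT j)
  exact ⟨_, (eq_intCast_comp_of_isUnit_det hunit (funext fun j => (hw j).symm)).symm⟩

end Matrix

open Matrix

theorem realSpan_range_mulVecLin_le {n m : ℕ} (B : Matrix (Fin n) (Fin m) ℤ) :
    realSpan (LinearMap.range B.mulVecLin) ≤
      LinearMap.range (B.map (Int.cast : ℤ → ℝ)).mulVecLin := by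
  rw [realSpan, Submodule.span_le]
  rintro _ ⟨_, ⟨z, rfl⟩, rfl⟩
  exact ⟨Int.cast ∘ z, funext fun i => (RingHom.map_mulVec (Int.castRingHom ℝ) B z i).symm⟩

/-- if `L` is unimodular, then for every `u` in the real span of `L` there is a
lattice point `v ∈ L` with `⌊u_i⌋ ≤ v_i ≤ ⌈u_i⌉` for all `i`; i.e. every closed face of `H_L`
contains a point of `L`. -/
theorem closedFace_contains_lattice_point
    {n : ℕ} (L : Submodule ℤ (Fin n → ℤ)) (hL : IsUnimodular L)
    (u : Fin n → ℝ) (hu : u ∈ realSpan L) :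
    ∃ v ∈ L, ∀ i, ⌊u i⌋ ≤ v i ∧ v i ≤ ⌈u i⌉ := by
  obtain ⟨m, B, hB, hminors, rfl⟩ := hL
  set A := B.map (Int.cast : ℤ → ℝ)
  obtain ⟨x, hx⟩ := realSpan_range_mulVecLin_le B hu
  obtain ⟨y, hy, hvertex⟩ := exists_vertex_of_injective A.mulVecLin
    (mulVec_map_intCast_injective hB) (l := fun i => (⌊u i⌋ : ℝ)) (u := fun i => (⌈u i⌉ : ℝ))
    (x := x) (hx ▸ ⟨fun i => Int.floor_le _, fun i => Int.le_ceil _⟩)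
  obtain ⟨z, rfl⟩ := exists_intCast_comp_eq_of_det_submatrix_mem B hminors _ hvertex (y := y)
    fun i hi => by
      rcases (Finset.mem_filter_univ i).mp hi with h | h
      exacts [⟨_, h.symm⟩, ⟨_, h.symm⟩]
  refine ⟨B *ᵥ z, ⟨z, rfl⟩, fun i => ?_⟩
  have hcast : A.mulVecLin (Int.cast ∘ z) i = ((B *ᵥ z) i : ℝ) :=
    (RingHom.map_mulVec (Int.castRingHom ℝ) B z i).symm
  have hlo : (⌊u i⌋ : ℝ) ≤ (B *ᵥ z) i := hcast ▸ hy.1 i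
  have hhi : ((B *ᵥ z) i : ℝ) ≤ ⌈u i⌉ := hcast ▸ hy.2 i
  exact ⟨mod_cast hlo, mod_cast hhi⟩
end
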